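/- arXiv:2010.08332 — 3 statements merged into one kernel-verified Lean document; each statement's English description precedes it below -/
import Mathlib

section
/- Let a_1,...,a_n be complex numbers, d_1,...,d_n real numbers, and define f(x) = ∑_{k=1}^n conj(a_k)·e(d_k x) where e(t) = exp(2πit). Then for all real x and τ, |f(x+τ) − f(x)| ≤ 2π·√(∑_{k=1}^n |a_k|²)·√(∑_{k=1}^n ‖d_k τ‖²), where ‖·‖ denotes the distance to the nearest integer. -/
noncomputable def e (t : ℝ) : ℂ := Complex.exp (2 * Real.pi * Complex.I * t)

noncomputable def distNearestInt (x : ℝ) : ℝ := |x - round x|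

/-! Each term moves by `c_k e(d_k x) (e(d_k τ) - 1)`, and since `e` has period `1`,
`|e(t) - 1| = |e(t - round t) - 1| ≤ 2π ‖t‖` by the chord–arc bound `|e^{iθ} - 1| ≤ |θ|`.
Summing and applying Cauchy–Schwarz to `∑ |a_k| ‖d_k τ‖` gives the bound. -/

open Finset

lemma e_eq_exp_ofReal_mul_I (t : ℝ) : e t = Complex.exp (Complex.I * (2 * Real.pi * t : ℝ)) := by
  unfold e
  push_cast
  ring_nf

lemma e_add (s t : ℝ) : e (s + t) = e s * e t := by
  rw [e, e, e, ← Complex.exp_add]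
  push_cast
  ring_nf

lemma e_intCast (m : ℤ) : e m = 1 := by
  rw [e, show 2 * (Real.pi : ℂ) * Complex.I * (m : ℝ) = m * (2 * Real.pi * Complex.I) by
    push_cast; ring]
  exact Complex.exp_int_mul_two_pi_mul_I m

lemma norm_e (t : ℝ) : ‖e t‖ = 1 := by
  rw [e_eq_exp_ofReal_mul_I, mul_comm]
  exact Complex.norm_exp_ofReal_mul_I _

lemma norm_e_sub_one_le (t : ℝ) : ‖e t - 1‖ ≤ 2 * Real.pi * distNearestInt t := by
  have hperiodic : e t = e (t - round t) := by
    rw [← mul_one (e (t - round t)), ← e_intCast (round t), ← e_add, sub_add_cancel]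
  rw [hperiodic, e_eq_exp_ofReal_mul_I]
  refine Real.norm_exp_I_mul_ofReal_sub_one_le.trans_eq ?_
  rw [Real.norm_eq_abs, abs_mul, abs_of_pos Real.two_pi_pos, distNearestInt]

lemma norm_e_add_sub_e_le (s t : ℝ) : ‖e (s + t) - e s‖ ≤ 2 * Real.pi * distNearestInt t := by
  rw [e_add, ← mul_sub_one, norm_mul, norm_e, one_mul]
  exact norm_e_sub_one_le t

lemma norm_sum_mul_e_shift_sub_le {ι : Type*} [Fintype ι] (c : ι → ℂ) (d : ι → ℝ) (x τ : ℝ) :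
    ‖∑ k, c k * e (d k * (x + τ)) - ∑ k, c k * e (d k * x)‖ ≤
      ∑ k, ‖c k‖ * (2 * Real.pi * distNearestInt (d k * τ)) := by
  rw [← sum_sub_distrib]
  refine (norm_sum_le _ _).trans (sum_le_sum fun k _ => ?_)
  rw [← mul_sub, norm_mul, mul_add]
  exact mul_le_mul_of_nonneg_left (norm_e_add_sub_e_le _ _) (norm_nonneg _)

theorem exp_sum_shift_bound (n : ℕ) (a : Fin n → ℂ) (d : Fin n → ℝ) (x τ : ℝ) :
    ‖(∑ k, (starRingEnd ℂ) (a k) * e (d k * (x + τ))) -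
      ∑ k, (starRingEnd ℂ) (a k) * e (d k * x)‖ ≤
    2 * Real.pi * Real.sqrt (∑ k, ‖a k‖ ^ 2) *
      Real.sqrt (∑ k, distNearestInt (d k * τ) ^ 2) := by
  calc _ ≤ ∑ k, ‖a k‖ * (2 * Real.pi * distNearestInt (d k * τ)) := by
        simpa only [Complex.norm_conj] using
          norm_sum_mul_e_shift_sub_le (fun k => starRingEnd ℂ (a k)) d x τ
    _ = 2 * Real.pi * ∑ k, ‖a k‖ * distNearestInt (d k * τ) := by
        rw [mul_sum]
        exact sum_congr rfl fun k _ => by ring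
    _ ≤ 2 * Real.pi * (Real.sqrt (∑ k, ‖a k‖ ^ 2) *
          Real.sqrt (∑ k, distNearestInt (d k * τ) ^ 2)) :=
        mul_le_mul_of_nonneg_left (Real.sum_mul_le_sqrt_mul_sqrt _ _ _) Real.two_pi_pos.le
    _ = _ := (mul_assoc _ _ _).symm
end

section
/- Let ω ≥ 1 be real, n ∈ ℕ, and d_1,...,d_n ∈ ℝ. Then there exists a positive integer T (depending only on d_1,...,d_n, n, ω) such that for every integer a there exists an integer h ∈ [a, a+T] satisfying ∑_{k=1}^n ‖h·d_k‖² ≤ n/ω. -/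
open Filter Topology

theorem UnitAddCircle.norm_coe_eq_distNearestInt (x : ℝ) :
    ‖(x : UnitAddCircle)‖ = distNearestInt x :=
  UnitAddCircle.norm_eq

theorem exists_finset_forall_add_zsmul_mem {G : Type*} [AddGroup G] [TopologicalSpace G]
    [IsTopologicalAddGroup G] [CompactSpace G] (x : G) {U : Set G} (hU : U ∈ 𝓝 0) :
    ∃ F : Finset ℤ, ∀ a : ℤ, ∃ t ∈ F, (a + t) • x ∈ U := by
  obtain ⟨V, hVU, hVopen, hV0⟩ := mem_nhds_iff.1 hU
  set Y := closure (Set.range fun a : ℤ => a • x)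
  have hcover : Y ⊆ ⋃ t : ℤ, (· + t • x) ⁻¹' V := by
    intro y hy
    have hnhds : IsOpen {g : G | y - g ∈ V} := hVopen.preimage (continuous_const.sub continuous_id)
    obtain ⟨_, hyg, s, rfl⟩ := mem_closure_iff.1 hy _ hnhds (by simpa using hV0)
    exact Set.mem_iUnion.2 ⟨-s, by simpa [neg_zsmul, ← sub_eq_add_neg] using hyg⟩
  obtain ⟨F, hF⟩ := isClosed_closure.isCompact.elim_finite_subcover _
    (fun t => hVopen.preimage (continuous_add_const _)) hcover
  refine ⟨F, fun a => ?_⟩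
  obtain ⟨t, htF, ht⟩ := Set.mem_iUnion₂.1 (hF (subset_closure ⟨a, rfl⟩))
  exact ⟨t, htF, hVU (by rwa [add_zsmul])⟩

theorem exists_forall_exists_zsmul_mem_Icc {G : Type*} [AddGroup G] [TopologicalSpace G]
    [IsTopologicalAddGroup G] [CompactSpace G] (x : G) {U : Set G} (hU : U ∈ 𝓝 0) :
    ∃ T : ℕ, ∀ a : ℤ, ∃ h : ℤ, a ≤ h ∧ h ≤ a + T ∧ h • x ∈ U := by
  obtain ⟨F, hF⟩ := exists_finset_forall_add_zsmul_mem x hU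
  set M := F.sup Int.natAbs
  refine ⟨2 * M, fun a => ?_⟩
  obtain ⟨t, htF, ht⟩ := hF (a + M)
  have htM : t.natAbs ≤ M := Finset.le_sup (f := Int.natAbs) htF
  exact ⟨a + M + t, by omega, by push_cast; omega, ht⟩

theorem chen_corollary (ω : ℝ) (hω : 1 ≤ ω) (n : ℕ) (d : Fin n → ℝ) :
    ∃ T : ℕ, 0 < T ∧ ∀ a : ℤ, ∃ h : ℤ, a ≤ h ∧ h ≤ a + T ∧
      ∑ k, distNearestInt ((h : ℝ) * d k) ^ 2 ≤ n / ω := by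
  have hω₀ : 0 < 1 / ω := by positivity
  set x : Fin n → UnitAddCircle := fun k => (d k : UnitAddCircle)
  have hU : {g : Fin n → UnitAddCircle | ∀ k, ‖g k‖ ^ 2 < 1 / ω} ∈ 𝓝 0 :=
    eventually_all.2 fun k => (((continuous_apply k).norm.pow 2).tendsto 0).eventually
      (gt_mem_nhds (by simpa using hω₀))
  obtain ⟨T, hT⟩ := exists_forall_exists_zsmul_mem_Icc x hU
  refine ⟨T + 1, T.succ_pos, fun a => ?_⟩
  obtain ⟨h, hah, hhT, hhU⟩ := hT a
  refine ⟨h, hah, by push_cast; omega, ?_⟩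
  have hcoord (k : Fin n) : (h • x) k = ((h * d k : ℝ) : UnitAddCircle) := by
    rw [← zsmul_eq_mul, AddCircle.coe_zsmul]; rfl
  calc ∑ k, distNearestInt ((h : ℝ) * d k) ^ 2 ≤ ∑ _k : Fin n, 1 / ω :=
        Finset.sum_le_sum fun k _ => by
          simpa only [hcoord, UnitAddCircle.norm_coe_eq_distNearestInt] using (hhU k).le
    _ = n / ω := by simp [div_eq_mul_inv]
end

section
/- Let H be a real Hilbert space and (u_n) a sequence in H with ∑_{n=1}^∞ ‖u_n‖² < ∞. Suppose that for every unit vector e ∈ H the series ∑_{n=1}^∞ ⟨u_n, e⟩ can be rearranged to converge conditionally. Then for every v ∈ H there exists a permutation (n_k) of ℕ such that ∑_{k=1}^∞ u_{n_k} = v. -/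
/-!
Testing the hypothesis against a unit vector `e` shows that over finite sets `G` of indices in
any tail, `∑ n ∈ G, ⟪u n, e⟫` is unbounded above. By Hahn–Banach, the fractional sums
`∑ pₙ • uₙ` with `pₙ ∈ [0, 1]` and `n ≥ N` are therefore dense in `H`, and rounding the
coefficients greedily to `0` or `1` (each time choosing the option whose cross term with the
current error is nonpositive) costs at most `(∑_{n ≥ N} ‖uₙ‖²)^{1/2}`. Hence the finite subset
sums of every tail are dense.

The rearrangement is built in blocks: block `k` adds the index `k` (if still missing) together
with a finite set of late indices bringing the partial sum within `1/(k+1)` of `v`. The block is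
ordered greedily, always taking next a vector whose inner product with the remaining error is
nonpositive, so that the partial sums inside the block never stray further than the tail of
`∑ ‖uₙ‖²` allows.
-/

open Filter Finset
open scoped RealInnerProductSpace Topology

lemma sum_le_tsum_nat_add {f : ℕ → ℝ} (hf : Summable f) (h₀ : ∀ n, 0 ≤ f n) {k : ℕ}
    {F : Finset ℕ} (hF : ∀ n ∈ F, k ≤ n) : ∑ n ∈ F, f n ≤ ∑' n, f (n + k) := by
  have hdisj : Disjoint (range k) F :=
    disjoint_left.2 fun n hn hnF => (mem_range.1 hn).not_ge (hF n hnF)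
  have := hf.sum_le_tsum (range k ∪ F) (fun n _ => h₀ n)
  rw [sum_union hdisj, ← hf.sum_add_tsum_nat_add k] at this
  linarith

lemma exists_finset_sum_gt_of_tendsto_atTop {a : ℕ → ℝ} {σ : Equiv.Perm ℕ}
    (h : Tendsto (fun N => ∑ n ∈ range N, a (σ n)) atTop atTop) (N : ℕ) (C : ℝ) :
    ∃ G : Finset ℕ, (∀ n ∈ G, N ≤ n) ∧ C < ∑ n ∈ G, a n := by
  obtain ⟨M, hM⟩ := (h.eventually_gt_atTop (C + ∑ n ∈ range N, |a n|)).exists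
  set S := (range M).map σ.toEmbedding
  refine ⟨S.filter (N ≤ ·), fun n hn => (mem_filter.1 hn).2, ?_⟩
  have hhead : ∑ n ∈ S.filter (¬ N ≤ ·), a n ≤ ∑ n ∈ range N, |a n| :=
    calc ∑ n ∈ S.filter (¬ N ≤ ·), a n ≤ ∑ n ∈ S.filter (¬ N ≤ ·), |a n| :=
          sum_le_sum fun n _ => le_abs_self (a n)
      _ ≤ ∑ n ∈ range N, |a n| :=
          sum_le_sum_of_subset_of_nonneg (fun n hn => mem_range.2 (not_le.1 (mem_filter.1 hn).2))
            fun n _ _ => abs_nonneg (a n)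
  have hS : ∑ n ∈ S, a n = ∑ n ∈ range M, a (σ n) := sum_map _ _ _
  rw [← sum_filter_add_sum_filter_not S (N ≤ ·)] at hS
  linarith

lemma sum_range_eq_sum_map_take {E : Type*} [AddCommMonoid E] (u : ℕ → E) {π : ℕ → ℕ}
    {l : List ℕ} (hπ : ∀ n (hn : n < l.length), π n = l[n]) {M : ℕ} (hM : M ≤ l.length) :
    ∑ n ∈ range M, u (π n) = ((l.take M).map u).sum := by
  induction M with
  | zero => simp
  | succ M ih =>
    rw [sum_range_succ, ih (by omega), List.map_take, List.map_take,
      List.sum_take_succ _ _ (by simpa using hM), List.getElem_map, hπ M hM]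

section Rearrangement

variable {E : Type*} [SeminormedAddCommGroup E] {L : ℕ → List ℕ}

lemma isPrefix_of_le (hpre : ∀ k, L k <+: L (k + 1)) {j k : ℕ} (h : j ≤ k) : L j <+: L k :=
  Nat.rel_of_forall_rel_succ_of_le (· <+: ·) hpre h

lemma le_length_of_prefix_chain (hpre : ∀ k, L k <+: L (k + 1)) (hnd : ∀ k, (L k).Nodup)
    (hcov : ∀ k, k ∈ L (k + 1)) (k : ℕ) : k ≤ (L k).length := by
  classical
  have hsub : range k ⊆ (L k).toFinset := fun i hi =>
    List.mem_toFinset.2 ((isPrefix_of_le hpre (mem_range.1 hi)).subset (hcov i))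
  simpa [List.toFinset_card_of_nodup (hnd k)] using card_le_card hsub

lemma exists_perm_eq_getElem_of_prefix_chain (hpre : ∀ k, L k <+: L (k + 1))
    (hnd : ∀ k, (L k).Nodup) (hcov : ∀ k, k ∈ L (k + 1)) :
    ∃ π : Equiv.Perm ℕ, ∀ k n (hn : n < (L k).length), π n = (L k)[n] := by
  have hlen := le_length_of_prefix_chain hpre hnd hcov
  have hagree : ∀ j k n (hj : n < (L j).length) (hk : n < (L k).length), (L j)[n] = (L k)[n] := by
    intro j k n hj hk
    rcases le_total j k with h | h
    · exact (isPrefix_of_le hpre h).getElem hj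
    · exact ((isPrefix_of_le hpre h).getElem hk).symm
  let f : ℕ → ℕ := fun n => (L (n + 1))[n]'(Nat.lt_of_lt_of_le n.lt_succ_self (hlen _))
  have hf : ∀ k n (hn : n < (L k).length), f n = (L k)[n] := fun k n hn => hagree _ _ _ _ hn
  have hinj : f.Injective := fun a b hab => by
    have hk := hlen (a + b + 1)
    rwa [hf (a + b + 1) a (by omega), hf (a + b + 1) b (by omega),
      (hnd _).getElem_inj_iff] at hab
  have hsurj : f.Surjective := fun j => by
    obtain ⟨n, hn, hnj⟩ := List.getElem_of_mem (hcov j)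
    exact ⟨n, (hf _ n hn).trans hnj⟩
  exact ⟨Equiv.ofBijective f ⟨hinj, hsurj⟩, hf⟩

lemma exists_finset_disjoint_norm_sum_sub_lt {u : ℕ → E}
    (hdense : ∀ (w : E) (N : ℕ) (δ : ℝ), 0 < δ →
      ∃ F : Finset ℕ, (∀ n ∈ F, N ≤ n) ∧ ‖∑ n ∈ F, u n - w‖ < δ)
    (S : Finset ℕ) (k : ℕ) (w : E) {δ : ℝ} (hδ : 0 < δ) :
    ∃ F : Finset ℕ, Disjoint S F ∧ k ∈ S ∪ F ∧ (∀ n ∈ F, k ≤ n) ∧ ‖∑ n ∈ F, u n - w‖ < δ := by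
  classical
  obtain ⟨N, hN⟩ := exists_nat_subset_range (insert k S)
  set K := {k} \ S
  obtain ⟨F, hFN, hF⟩ := hdense (w - ∑ n ∈ K, u n) N δ hδ
  have hFS : ∀ n ∈ F, n ∉ insert k S := fun n hn h =>
    (mem_range.1 (hN h)).not_ge (hFN n hn)
  refine ⟨K ∪ F, ?_, ?_, ?_, ?_⟩
  · exact disjoint_union_right.2 ⟨sdiff_disjoint.symm,
      disjoint_right.2 fun n hn => (not_or.1 (mem_insert.not.1 (hFS n hn))).2⟩
  · by_cases hk : k ∈ S <;> simp [K, hk]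
  · intro n hn
    rcases mem_union.1 hn with hn | hn
    · exact (mem_singleton.1 (mem_sdiff.1 hn).1).ge
    · exact le_of_lt (mem_range.1 (hN (mem_insert_self k S))) |>.trans (hFN n hn)
  · have hKF : Disjoint K F := disjoint_left.2 fun n hn hnF =>
      hFS n hnF (mem_insert.2 (Or.inl (mem_singleton.1 (mem_sdiff.1 hn).1)))
    rw [sum_union hKF]
    convert hF using 2
    abel

lemma tendsto_sum_perm_of_prefix_chain {u : ℕ → E} {v : E}
    (hlen : ∀ k, k ≤ (L k).length) {π : Equiv.Perm ℕ}
    (hπ : ∀ k n (hn : n < (L k).length), π n = (L k)[n]) {C : ℕ → ℝ}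
    (hC : Tendsto C atTop (𝓝 0))
    (hbound : ∀ k M, (L k).length ≤ M → M ≤ (L (k + 1)).length →
      ‖(((L (k + 1)).take M).map u).sum - v‖ ≤ C k) :
    Tendsto (fun N => ∑ n ∈ range N, u (π n)) atTop (𝓝 v) := by
  refine Metric.tendsto_atTop.2 fun ε hε => ?_
  obtain ⟨K, hK⟩ := eventually_atTop.1 (hC.eventually (gt_mem_nhds hε))
  refine ⟨(L K).length, fun M hM => ?_⟩
  classical
  set i := Nat.findGreatest (fun i => (L i).length ≤ M) M
  have hKM : K ≤ M := (hlen K).trans hM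
  have hiK : K ≤ i := Nat.le_findGreatest hKM hM
  have hiM : (L i).length ≤ M := Nat.findGreatest_spec (P := fun i => (L i).length ≤ M) hKM hM
  have hMi : M < (L (i + 1)).length := by
    by_contra! h
    have := hlen (i + 1)
    exact Nat.findGreatest_is_greatest (Nat.lt_succ_self i) (by omega) h
  rw [dist_eq_norm, sum_range_eq_sum_map_take u (hπ (i + 1)) hMi.le]
  exact (hbound i M hiM hMi.le).trans_lt (hK i hiK)

lemma exists_perm_tendsto_of_blocks (u : ℕ → E) (v : E)
    {δ : ℕ → ℝ} (hδ : Tendsto δ atTop (𝓝 0))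
    (hblock : ∀ (l : List ℕ) (k : ℕ), ∃ b : List ℕ, (l.Nodup → (l ++ b).Nodup) ∧ k ∈ l ++ b ∧
      ‖((l ++ b).map u).sum - v‖ ≤ δ k ∧
      ∀ t, ‖((l ++ b.take t).map u).sum - v‖ ≤ ‖(l.map u).sum - v‖ + δ k) :
    ∃ π : Equiv.Perm ℕ, Tendsto (fun N => ∑ n ∈ range N, u (π n)) atTop (𝓝 v) := by
  choose b hb using hblock
  let L : ℕ → List ℕ := fun k => Nat.rec [] (fun k l => l ++ b l k) k
  have hL : ∀ k, L (k + 1) = L k ++ b (L k) k := fun _ => rfl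
  have hpre : ∀ k, L k <+: L (k + 1) := fun k => hL k ▸ List.prefix_append _ _
  have hnd : ∀ k, (L k).Nodup := fun k => by
    induction k with
    | zero => exact List.nodup_nil
    | succ k ih => exact hL k ▸ (hb _ _).1 ih
  have hcov : ∀ k, k ∈ L (k + 1) := fun k => hL k ▸ (hb _ _).2.1
  obtain ⟨π, hπ⟩ := exists_perm_eq_getElem_of_prefix_chain hpre hnd hcov
  have herr : Tendsto (fun k => ‖((L k).map u).sum - v‖) atTop (𝓝 0) :=
    (tendsto_add_atTop_iff_nat 1).1 <|
      squeeze_zero (fun _ => norm_nonneg _) (fun k => hL k ▸ (hb _ _).2.2.1) hδ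
  refine ⟨π, tendsto_sum_perm_of_prefix_chain (le_length_of_prefix_chain hpre hnd hcov) hπ
    (by simpa using herr.add hδ) fun k M hM _ => ?_⟩
  rw [hL, List.take_append, List.take_of_length_le hM]
  exact (hb _ _).2.2.2 _

end Rearrangement

def tailCube (N : ℕ) : Set (ℕ →₀ ℝ) := {p | ∀ n, p n ∈ Set.Icc (0 : ℝ) 1 ∧ (n < N → p n = 0)}

lemma convex_tailCube (N : ℕ) : Convex ℝ (tailCube N) := by
  intro p hp q hq a b ha hb hab n
  refine ⟨convex_Icc (0 : ℝ) 1 (hp n).1 (hq n).1 ha hb hab, fun hn => ?_⟩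
  simp [(hp n).2 hn, (hq n).2 hn]

section InnerProduct

variable {H : Type*} [NormedAddCommGroup H] [InnerProductSpace ℝ H]

lemma norm_add_smul_sq_le {D z : H} {a : ℝ} (ha : a * ⟪D, z⟫ ≤ 0) (ha₁ : |a| ≤ 1) :
    ‖D + a • z‖ ^ 2 ≤ ‖D‖ ^ 2 + ‖z‖ ^ 2 := by
  have : a ^ 2 ≤ 1 := by nlinarith [sq_abs a, abs_nonneg a]
  rw [norm_add_sq_real, real_inner_smul_right, norm_smul, mul_pow, Real.norm_eq_abs, sq_abs]
  nlinarith [sq_nonneg ‖z‖]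

lemma exists_subset_norm_sum_sub_sum_smul_sq_le {ι : Type*} (x : ι → H) (p : ι → ℝ)
    (T : Finset ι) (hp : ∀ i ∈ T, p i ∈ Set.Icc (0 : ℝ) 1) :
    ∃ G ⊆ T, ‖∑ i ∈ G, x i - ∑ i ∈ T, p i • x i‖ ^ 2 ≤ ∑ i ∈ T, ‖x i‖ ^ 2 := by
  classical
  induction T using Finset.induction_on with
  | empty => exact ⟨∅, by simp⟩
  | @insert a T ha ih =>
    obtain ⟨G, hGT, hG⟩ := ih fun i hi => hp i (mem_insert_of_mem hi)
    obtain ⟨hp₀, hp₁⟩ := hp a (mem_insert_self a T)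
    set D := ∑ i ∈ G, x i - ∑ i ∈ T, p i • x i with hD_def
    rw [sum_insert ha, sum_insert ha]
    by_cases hD : ⟪D, x a⟫ ≤ 0
    · refine ⟨insert a G, insert_subset_insert a hGT, ?_⟩
      have hsum : ∑ i ∈ insert a G, x i - (p a • x a + ∑ i ∈ T, p i • x i) =
          D + (1 - p a) • x a := by
        rw [sum_insert fun h => ha (hGT h), sub_smul, one_smul, hD_def]; abel
      rw [hsum]
      have := norm_add_smul_sq_le (D := D) (z := x a) (a := 1 - p a)
        (mul_nonpos_of_nonneg_of_nonpos (by linarith) hD) (by rw [abs_le]; constructor <;> linarith)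
      linarith
    · refine ⟨G, hGT.trans (subset_insert a T), ?_⟩
      have hsum : ∑ i ∈ G, x i - (p a • x a + ∑ i ∈ T, p i • x i) = D + (-p a) • x a := by
        rw [neg_smul, hD_def]; abel
      rw [hsum]
      have := norm_add_smul_sq_le (D := D) (z := x a) (a := -p a)
        (by nlinarith) (by rw [abs_le]; constructor <;> linarith)
      linarith

lemma exists_list_norm_add_sum_take_sq_le {ι : Type*} [DecidableEq ι] (y : ι → H) (R : Finset ι)
    (E : H) (hE : E + ∑ i ∈ R, y i = 0) :
    ∃ l : List ι, l.Nodup ∧ l.toFinset = R ∧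
      ∀ j, ‖E + ((l.take j).map y).sum‖ ^ 2 ≤ ‖E‖ ^ 2 + ∑ i ∈ R, ‖y i‖ ^ 2 := by
  induction R using Finset.strongInduction generalizing E with
  | H R ih =>
    rcases R.eq_empty_or_nonempty with rfl | hR
    · exact ⟨[], List.nodup_nil, rfl, fun j => by simp⟩
    obtain ⟨r, hr, hEr⟩ : ∃ r ∈ R, ⟪E, y r⟫ ≤ 0 := by
      refine exists_le_of_sum_le hR ?_
      rw [sum_const_zero, ← inner_sum, ← neg_eq_of_add_eq_zero_right hE, inner_neg_right]
      exact neg_nonpos.2 real_inner_self_nonneg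
    obtain ⟨l, hl, hlR, hbound⟩ := ih (R.erase r) (erase_ssubset hr) (E + y r)
      (by rw [add_assoc, add_sum_erase R y hr, hE])
    have hstep : ‖E + y r‖ ^ 2 ≤ ‖E‖ ^ 2 + ‖y r‖ ^ 2 := by
      simpa using norm_add_smul_sq_le (D := E) (z := y r) (a := 1) (by simpa using hEr) (by simp)
    refine ⟨r :: l, ?_, ?_, fun j => ?_⟩
    · refine List.nodup_cons.2 ⟨fun h => ?_, hl⟩
      simpa [hlR] using List.mem_toFinset.2 h
    · rw [List.toFinset_cons, hlR, insert_erase hr]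
    · rw [← add_sum_erase R _ hr]
      cases j with
      | zero =>
        simp only [List.take_zero, List.map_nil, List.sum_nil, add_zero]
        have := sum_nonneg fun i (_ : i ∈ R.erase r) => sq_nonneg ‖y i‖
        nlinarith [sq_nonneg ‖y r‖]
      | succ j =>
        have := hbound j
        simp only [List.take_succ_cons, List.map_cons, List.sum_cons, ← add_assoc]
        linarith

lemma exists_list_norm_sum_take_sub_le {ι : Type*} [DecidableEq ι] (x : ι → H) (F : Finset ι) :
    ∃ l : List ι, l.Nodup ∧ l.toFinset = F ∧ ∀ j,
      ‖((l.take j).map x).sum - ∑ i ∈ F, x i‖ ≤ ‖∑ i ∈ F, x i‖ + √(∑ i ∈ F, ‖x i‖ ^ 2) := by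
  obtain ⟨l, hl, hlF, hbound⟩ :=
    exists_list_norm_add_sum_take_sq_le x F (-∑ i ∈ F, x i) (neg_add_cancel _)
  refine ⟨l, hl, hlF, fun j => ?_⟩
  have hsq := Real.sq_sqrt (sum_nonneg fun i (_ : i ∈ F) => sq_nonneg ‖x i‖)
  have hsqrt := Real.sqrt_nonneg (∑ i ∈ F, ‖x i‖ ^ 2)
  have := hbound j
  rw [neg_add_eq_sub, norm_neg] at this
  rw [← pow_le_pow_iff_left₀ (norm_nonneg _) (by positivity) two_ne_zero]
  nlinarith [norm_nonneg (∑ i ∈ F, x i)]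

lemma exists_finset_sum_inner_gt {u : ℕ → H}
    (h : ∀ e : H, ‖e‖ = 1 → ∃ σ : Equiv.Perm ℕ,
      Tendsto (fun N => ∑ n ∈ range N, ⟪u (σ n), e⟫) atTop atTop)
    {y : H} (hy : y ≠ 0) (N : ℕ) (C : ℝ) :
    ∃ G : Finset ℕ, (∀ n ∈ G, N ≤ n) ∧ C < ∑ n ∈ G, ⟪u n, y⟫ := by
  have hy' : 0 < ‖y‖ := norm_pos_iff.2 hy
  obtain ⟨σ, hσ⟩ := h (‖y‖⁻¹ • y) (norm_smul_inv_norm hy)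
  obtain ⟨G, hGN, hG⟩ := exists_finset_sum_gt_of_tendsto_atTop
    (a := fun n => ⟪u n, ‖y‖⁻¹ • y⟫) hσ N (‖y‖⁻¹ * C)
  refine ⟨G, hGN, ?_⟩
  have hscale : ∑ n ∈ G, ⟪u n, ‖y‖⁻¹ • y⟫ = ‖y‖⁻¹ * ∑ n ∈ G, ⟪u n, y⟫ := by
    rw [mul_sum]
    exact sum_congr rfl fun n _ => real_inner_smul_right _ _ _
  rw [hscale] at hG
  exact lt_of_mul_lt_mul_left hG (inv_nonneg.2 hy'.le)

lemma sum_mem_image_tailCube (u : ℕ → H) {N : ℕ} {G : Finset ℕ} (hG : ∀ n ∈ G, N ≤ n) :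
    ∑ n ∈ G, u n ∈ Finsupp.linearCombination ℝ u '' tailCube N := by
  classical
  refine ⟨∑ n ∈ G, Finsupp.single n 1, fun m => ?_, by simp⟩
  simp only [Finsupp.finsetSum_apply, Finsupp.single_apply, sum_ite_eq']
  split_ifs with hm
  · exact ⟨by simp, fun hmN => absurd (hG m hm) (not_le.2 hmN)⟩
  · simp

lemma dense_image_tailCube [CompleteSpace H] {u : ℕ → H}
    (hdir : ∀ y : H, y ≠ 0 → ∀ N : ℕ, ∀ C : ℝ,
      ∃ G : Finset ℕ, (∀ n ∈ G, N ≤ n) ∧ C < ∑ n ∈ G, ⟪u n, y⟫) (N : ℕ) :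
    Dense (Finsupp.linearCombination ℝ u '' tailCube N) := by
  intro v
  by_contra hv
  obtain ⟨f, c, hfP, hcv⟩ := geometric_hahn_banach_closed_point
    (((convex_tailCube N).linear_image _).closure) isClosed_closure hv
  have hP : ∀ G : Finset ℕ, (∀ n ∈ G, N ≤ n) → f (∑ n ∈ G, u n) < c := fun G hG =>
    hfP _ (subset_closure (sum_mem_image_tailCube u hG))
  set y := (InnerProductSpace.toDual ℝ H).symm f
  have hfy : ∀ x, f x = ⟪x, y⟫ := fun x => by
    rw [real_inner_comm, InnerProductSpace.toDual_symm_apply]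
  have hy : y ≠ 0 := by
    intro hy0
    have := hP ∅ (by simp)
    rw [hfy, hy0, inner_zero_right] at hcv
    simp only [sum_empty, map_zero] at this
    linarith
  obtain ⟨G, hGN, hG⟩ := hdir y hy N c
  have := hP G hGN
  rw [hfy, sum_inner] at this
  linarith

lemma norm_sub_linearCombination_sq_le_of_mem_tailCube (u : ℕ → H)
    (hsum : Summable fun n => ‖u n‖ ^ 2) {N : ℕ} {p : ℕ →₀ ℝ} (hp : p ∈ tailCube N) :
    ∃ G : Finset ℕ, (∀ n ∈ G, N ≤ n) ∧
      ‖∑ n ∈ G, u n - Finsupp.linearCombination ℝ u p‖ ^ 2 ≤ ∑' n, ‖u (n + N)‖ ^ 2 := by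
  have hsupp : ∀ n ∈ p.support, N ≤ n := fun n hn =>
    not_lt.1 fun h => Finsupp.mem_support_iff.1 hn ((hp n).2 h)
  obtain ⟨G, hGp, hG⟩ := exists_subset_norm_sum_sub_sum_smul_sq_le u p p.support fun n _ => (hp n).1
  refine ⟨G, fun n hn => hsupp n (hGp hn), ?_⟩
  rw [Finsupp.linearCombination_apply]
  exact hG.trans (sum_le_tsum_nat_add hsum (fun n => sq_nonneg ‖u n‖) hsupp)

lemma exists_finset_norm_sum_sub_lt [CompleteSpace H] {u : ℕ → H}
    (hsum : Summable fun n => ‖u n‖ ^ 2)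
    (hdir : ∀ y : H, y ≠ 0 → ∀ N : ℕ, ∀ C : ℝ,
      ∃ G : Finset ℕ, (∀ n ∈ G, N ≤ n) ∧ C < ∑ n ∈ G, ⟪u n, y⟫)
    (w : H) (N : ℕ) {δ : ℝ} (hδ : 0 < δ) :
    ∃ F : Finset ℕ, (∀ n ∈ F, N ≤ n) ∧ ‖∑ n ∈ F, u n - w‖ < δ := by
  obtain ⟨N', hN'δ, hN'N⟩ := (((tendsto_sum_nat_add fun n => ‖u n‖ ^ 2).eventually
    (gt_mem_nhds (by positivity : (0 : ℝ) < (δ / 2) ^ 2))).and (eventually_ge_atTop N)).exists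
  obtain ⟨_, ⟨p, hp, rfl⟩, hpw⟩ :=
    Metric.mem_closure_iff.1 (dense_image_tailCube hdir N' w) (δ / 2) (half_pos hδ)
  obtain ⟨G, hGN', hG⟩ := norm_sub_linearCombination_sq_le_of_mem_tailCube u hsum hp
  have hGp : ‖∑ n ∈ G, u n - Finsupp.linearCombination ℝ u p‖ < δ / 2 :=
    (pow_lt_pow_iff_left₀ (norm_nonneg _) (half_pos hδ).le two_ne_zero).1 (hG.trans_lt hN'δ)
  refine ⟨G, fun n hn => hN'N.trans (hGN' n hn), ?_⟩
  rw [dist_eq_norm'] at hpw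
  linarith [norm_sub_le_norm_sub_add_norm_sub (∑ n ∈ G, u n) (Finsupp.linearCombination ℝ u p) w]

lemma exists_next_block {u : ℕ → H} (hsum : Summable fun n => ‖u n‖ ^ 2)
    (hdense : ∀ (w : H) (N : ℕ) (δ : ℝ), 0 < δ →
      ∃ F : Finset ℕ, (∀ n ∈ F, N ≤ n) ∧ ‖∑ n ∈ F, u n - w‖ < δ)
    (v : H) (l : List ℕ) (k : ℕ) {δ : ℝ} (hδ : 0 < δ) :
    ∃ b : List ℕ, (l.Nodup → (l ++ b).Nodup) ∧ k ∈ l ++ b ∧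
      ‖((l ++ b).map u).sum - v‖ ≤ 2 * δ + √(∑' n, ‖u (n + k)‖ ^ 2) ∧
      ∀ t, ‖((l ++ b.take t).map u).sum - v‖ ≤
        ‖(l.map u).sum - v‖ + (2 * δ + √(∑' n, ‖u (n + k)‖ ^ 2)) := by
  classical
  obtain ⟨F, hlF, hk, hFk, hF⟩ :=
    exists_finset_disjoint_norm_sum_sub_lt hdense l.toFinset k (v - (l.map u).sum) hδ
  obtain ⟨b, hb, hbF, hbound⟩ := exists_list_norm_sum_take_sub_le u F
  have hmem : ∀ n, n ∈ b ↔ n ∈ F := fun n => by rw [← hbF, List.mem_toFinset]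
  have hsumb : (b.map u).sum = ∑ n ∈ F, u n := by rw [← hbF, List.sum_toFinset u hb]
  have hτ : √(∑ n ∈ F, ‖u n‖ ^ 2) ≤ √(∑' n, ‖u (n + k)‖ ^ 2) :=
    Real.sqrt_le_sqrt (sum_le_tsum_nat_add hsum (fun n => sq_nonneg ‖u n‖) hFk)
  have hτ₀ := Real.sqrt_nonneg (∑ n ∈ F, ‖u n‖ ^ 2)
  set D := (l.map u).sum - v with hD
  have hnear : ‖D + ∑ n ∈ F, u n‖ < δ := by
    rw [show D + ∑ n ∈ F, u n = ∑ n ∈ F, u n - (v - (l.map u).sum) by rw [hD]; abel]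
    exact hF
  have hFD : ‖∑ n ∈ F, u n‖ ≤ ‖D‖ + δ := by
    have := norm_sub_le (D + ∑ n ∈ F, u n) D
    rw [add_sub_cancel_left] at this
    linarith
  refine ⟨b, fun hl => List.nodup_append.2 ⟨hl, hb, ?_⟩, ?_, ?_, fun t => ?_⟩
  · rintro n hn _ hn' rfl
    exact disjoint_left.1 hlF (List.mem_toFinset.2 hn) ((hmem n).1 hn')
  · rcases mem_union.1 hk with hk | hk
    · exact List.mem_append_left _ (List.mem_toFinset.1 hk)
    · exact List.mem_append_right _ ((hmem k).2 hk)
  · rw [List.map_append, List.sum_append, hsumb, add_sub_right_comm]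
    linarith
  · rw [List.map_append, List.sum_append]
    have hsplit : (l.map u).sum + ((b.take t).map u).sum - v =
        (D + ∑ n ∈ F, u n) + (((b.take t).map u).sum - ∑ n ∈ F, u n) := by
      rw [hD]; abel
    rw [hsplit]
    linarith [norm_add_le (D + ∑ n ∈ F, u n) (((b.take t).map u).sum - ∑ n ∈ F, u n), hbound t]

end InnerProduct

theorem pechersky {H : Type*} [NormedAddCommGroup H] [InnerProductSpace ℝ H] [CompleteSpace H]
    (u : ℕ → H) (hsum : Summable fun n => ‖u n‖ ^ 2)
    (hcond : ∀ e : H, ‖e‖ = 1 →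
      (∃ πp : Equiv.Perm ℕ, Filter.Tendsto
        (fun N => ∑ n ∈ Finset.range N, (inner ℝ (u (πp n)) e : ℝ)) Filter.atTop Filter.atTop) ∧
      (∃ πm : Equiv.Perm ℕ, Filter.Tendsto
        (fun N => ∑ n ∈ Finset.range N, (inner ℝ (u (πm n)) e : ℝ)) Filter.atTop Filter.atBot)) :
    ∀ v : H, ∃ π : Equiv.Perm ℕ,
      Filter.Tendsto (fun N => ∑ n ∈ Finset.range N, u (π n)) Filter.atTop (nhds v) := by
  intro v
  have hdir : ∀ y : H, y ≠ 0 → ∀ N : ℕ, ∀ C : ℝ,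
      ∃ G : Finset ℕ, (∀ n ∈ G, N ≤ n) ∧ C < ∑ n ∈ G, ⟪u n, y⟫ :=
    fun y hy => exists_finset_sum_inner_gt (fun e he => (hcond e he).1) hy
  have hdense : ∀ (w : H) (N : ℕ) (δ : ℝ), 0 < δ →
      ∃ F : Finset ℕ, (∀ n ∈ F, N ≤ n) ∧ ‖∑ n ∈ F, u n - w‖ < δ :=
    fun w N _ hδ => exists_finset_norm_sum_sub_lt hsum hdir w N hδ
  refine exists_perm_tendsto_of_blocks u v
    (δ := fun k => 2 * (1 / ((k : ℝ) + 1)) + √(∑' n, ‖u (n + k)‖ ^ 2)) ?_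
    fun l k => exists_next_block hsum hdense v l k (by positivity)
  simpa using (tendsto_one_div_add_atTop_nhds_zero_nat.const_mul 2).add
    (tendsto_sum_nat_add fun n => ‖u n‖ ^ 2).sqrt
end
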